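/- arXiv:1501.07546 — 3 statements merged into one kernel-verified Lean document; each statement's English description precedes it below -/
import Mathlib

section
/- The 2-break distance between circular genomes P and Q on the same n blocks equals n - c(P,Q), where c(P,Q) is the number of alternating black-red cycles in the breakpoint graph G(P,Q). -/
/-- A genome (set of adjacency edges) is a perfect matching on the vertex set,
modeled as a fixed-point-free involution. -/
def IsPerfectMatching {V : Type*} (m : Equiv.Perm V) : Prop :=
  (∀ v, m (m v) = v) ∧ ∀ v, m v ≠ v

/-- The number of alternating black-red cycles of the breakpoint graph
`G(P,Q)` (black matching `black`, red matching `red`): each alternating cycle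
with `ℓ` black edges corresponds to exactly two orbits of size `ℓ` of the
permutation `black * red`, so we count the orbits (nontrivial ones via
`cycleType`, fixed points separately) and halve. -/
def bpCycles {V : Type*} [Fintype V] [DecidableEq V] (black red : Equiv.Perm V) : ℕ :=
  ((black * red).cycleType.card + (Fintype.card V - (black * red).support.card)) / 2

/-- A 2-break on the matching `m`: pick two distinct red edges
`{a, m a}` and `{b, m b}` and replace them by `{a, m b}`, `{b, m a}`
(conjugation by the transposition `swap a b`). -/
def TwoBreak {V : Type*} [DecidableEq V] (m m' : Equiv.Perm V) : Prop :=
  ∃ a b : V, a ≠ b ∧ m a ≠ b ∧ m' = (Equiv.swap a b) * m * (Equiv.swap a b)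

/-- A scenario of k 2-breaks transforming the red matching Q into the black
matching P. -/
def TwoBreakChain {V : Type*} [DecidableEq V] (P Q : Equiv.Perm V) (k : ℕ) : Prop :=
  ∃ f : ℕ → Equiv.Perm V, f 0 = Q ∧ f k = P ∧ ∀ i < k, TwoBreak (f i) (f (i + 1))

/-! Write `c(g)` for the number of cycles of a permutation `g`, fixed points included, so that
`c(P, Q) = c(P * Q) / 2`. A 2-break replaces `m` by `s * m * s` for `s = swap a b`, and
`P * (s * m * s) = swap (P a) (P b) * (P * m) * s`. Multiplying by a transposition raises `c` by
at most one, so each 2-break raises `c(P * m)` by at most two, while `c(P * P) = c(1) = |V|`;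
hence at least `(|V| - c(P * Q)) / 2` steps are needed. Conversely, while `m ≠ P`, choose `v`
with `m v ≠ P v` and the 2-break creating the black edge `{v, P v}`: each of its two
transpositions cuts a point out of its cycle, so `c(P * m)` rises by exactly two. -/

open Equiv Finset

namespace Equiv.Perm

variable {V : Type*}

noncomputable def numCycles (g : Perm V) : ℕ := Nat.card (Quotient (SameCycle.setoid g))

theorem SameCycle.apply_eq_of_forall_apply_eq {β : Type*} {g : Perm V} {f : V → β}
    (hf : ∀ u, f (g u) = f u) {x y : V} (h : g.SameCycle x y) : f x = f y := by
  obtain ⟨i, rfl⟩ := h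
  induction i using Int.induction_on generalizing x with
  | zero => simp
  | succ i ih => rw [zpow_add_one, mul_apply, ← ih, hf]
  | pred i ih =>
    rw [zpow_sub_one, mul_apply, ← ih]
    simpa using hf (g⁻¹ x)

theorem numCycles_le_card [Fintype V] (g : Perm V) : numCycles g ≤ Fintype.card V := by
  rw [← Nat.card_eq_fintype_card]
  exact Nat.card_le_card_of_surjective _ Quotient.mk_surjective

theorem numCycles_one [Fintype V] : numCycles (1 : Perm V) = Fintype.card V := by
  rw [← Nat.card_eq_fintype_card]
  exact (Nat.card_eq_of_bijective _
    ⟨fun _ _ h => sameCycle_one.1 (Quotient.exact h), Quotient.mk_surjective⟩).symm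

theorem numCycles_conj (k g : Perm V) : numCycles (k * g * k⁻¹) = numCycles g :=
  Nat.card_congr (Quotient.congr k⁻¹ fun _ _ => sameCycle_conj)

theorem numCycles_swap_mul [DecidableEq V] (g : Perm V) (a b : V) :
    numCycles (swap a b * g) = numCycles (g * swap a b) := by
  rw [← numCycles_conj (swap a b) (g * swap a b)]
  simp [mul_assoc]

theorem numCycles_mul_swap_le [DecidableEq V] [Finite V] (g : Perm V) (a b : V) :
    numCycles (g * swap a b) ≤ numCycles g + 1 := by
  classical
  set h := g * swap a b
  let mk := Quotient.mk (SameCycle.setoid h)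
  -- Since `g u = h (swap a b u)`, each `g`-cycle is a union of `h`-cycles once the `h`-cycles
  -- of `a` and `b` are glued together.
  let glue : Quotient (SameCycle.setoid h) → Quotient (SameCycle.setoid h) :=
    fun q => if q = mk b then mk a else q
  have hglue : ∀ u, glue (mk (g u)) = glue (mk u) := by
    intro u
    have hgu : mk (g u) = mk (swap a b u) := Quotient.sound <| by
      show h.SameCycle _ _
      rw [show g u = h (swap a b u) by simp [h]]
      exact sameCycle_apply_left.2 SameCycle.rfl
    rw [hgu, swap_apply_def]
    split_ifs with hua hub
    · simp [glue, hua]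
    · simp [glue, hub]
    · rfl
  let F : Quotient (SameCycle.setoid g) → Quotient (SameCycle.setoid h) :=
    Quotient.lift (glue ∘ mk) fun _ _ => SameCycle.apply_eq_of_forall_apply_eq hglue
  have hF : Function.Surjective fun o : Option _ => o.elim (mk b) F := by
    rintro ⟨x⟩
    by_cases hx : mk x = mk b
    · exact ⟨none, hx.symm⟩
    · exact ⟨some (Quotient.mk _ x), if_neg hx⟩
  calc numCycles h ≤ Nat.card (Option (Quotient (SameCycle.setoid g))) :=
        Nat.card_le_card_of_surjective _ hF
    _ = numCycles g + 1 := Finite.card_option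

theorem numCycles_lt_mul_swap [DecidableEq V] [Finite V] {g : Perm V} {x y : V}
    (hxy : x ≠ y) (hy : g y = x) : numCycles g < numCycles (g * swap x y) := by
  set h := g * swap x y
  -- The cycles of `h` refine those of `g`, and `h` separates `x` from `y` by fixing `x`.
  have hyx : g.SameCycle y x := ⟨1, by simpa using hy⟩
  have hhx : h x = x := by simp [h, hy]
  have hstep : ∀ u, Quotient.mk (SameCycle.setoid g) (h u) = Quotient.mk _ u := by
    intro u
    refine Quotient.sound (sameCycle_apply_left.2 ?_)
    rw [swap_apply_def]
    split_ifs with hux huy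
    · exact hux ▸ hyx
    · exact huy ▸ hyx.symm
    · exact SameCycle.rfl
  let F : Quotient (SameCycle.setoid h) → Quotient (SameCycle.setoid g) :=
    Quotient.lift (Quotient.mk _) fun _ _ => SameCycle.apply_eq_of_forall_apply_eq hstep
  have hF : Function.Surjective F := Quotient.ind fun u => ⟨Quotient.mk _ u, rfl⟩
  have hF' : ¬ Function.Injective F := fun hinj => hxy <|
    SameCycle.eq_of_left (Quotient.exact (@hinj ⟦x⟧ ⟦y⟧ (Quotient.sound hyx.symm))) hhx
  by_contra hle
  exact hF' (hF.bijective_of_nat_card_le (not_lt.1 hle)).1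

theorem numCycles_eq_card_cycleType_add [Fintype V] [DecidableEq V] (g : Perm V) :
    numCycles g = Multiset.card g.cycleType + (Fintype.card V - #g.support) := by
  let Φ : V → Perm V ⊕ V := fun x => if x ∈ g.support then .inl (g.cycleOf x) else .inr x
  have hker : SameCycle.setoid g = Setoid.ker Φ := by
    ext x y
    show g.SameCycle x y ↔ Φ x = Φ y
    by_cases hx : x ∈ g.support <;> by_cases hy : y ∈ g.support <;>
      simp only [Φ, hx, hy, if_true, if_false, reduceCtorEq, Sum.inl.injEq, Sum.inr.injEq,
        iff_false]
    · refine ⟨SameCycle.cycleOf_eq, fun h => ?_⟩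
      exact (mem_support_cycleOf_iff.1 (h ▸ mem_support_cycleOf_iff.2 ⟨SameCycle.rfl, hy⟩)).1
    · exact fun h => hy (h.mem_support_iff.1 hx)
    · exact fun h => hx (h.mem_support_iff.2 hy)
    · exact ⟨fun h => h.eq_of_left (notMem_support.1 hx), fun h => h ▸ SameCycle.rfl⟩
  have hrange : Set.range Φ = ↑(g.cycleFactorsFinset.disjSum g.supportᶜ) := by
    ext (c | y) <;> rw [mem_coe]
    · rw [inl_mem_disjSum]
      constructor
      · rintro ⟨x, hx⟩
        by_cases hxs : x ∈ g.support
        · simp only [Φ, if_pos hxs, Sum.inl.injEq] at hx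
          exact hx ▸ cycleOf_mem_cycleFactorsFinset_iff.2 hxs
        · simp only [Φ, if_neg hxs, reduceCtorEq] at hx
      · intro hc
        obtain ⟨a, ha⟩ := (mem_cycleFactorsFinset_iff.1 hc).1.nonempty_support
        refine ⟨a, ?_⟩
        simp only [Φ, if_pos (mem_cycleFactorsFinset_support_le hc ha), ← cycle_is_cycleOf ha hc]
    · rw [inr_mem_disjSum, mem_compl]
      constructor
      · rintro ⟨x, hx⟩
        by_cases hxs : x ∈ g.support
        · simp only [Φ, if_pos hxs, reduceCtorEq] at hx
        · simp only [Φ, if_neg hxs, Sum.inr.injEq] at hx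
          exact hx ▸ hxs
      · exact fun hy => ⟨y, if_neg hy⟩
  rw [numCycles, hker, Nat.card_congr (Setoid.quotientKerEquivRange Φ), hrange]
  simp [card_compl, cycleType_def]

end Equiv.Perm

open Equiv.Perm

section TwoBreaks

variable {V : Type*}

theorem IsPerfectMatching.mul_self_eq_one {P : Perm V} (hP : IsPerfectMatching P) : P * P = 1 :=
  Equiv.ext hP.1

theorem IsPerfectMatching.conj {m : Perm V} (hm : IsPerfectMatching m) (k : Perm V) :
    IsPerfectMatching (k * m * k⁻¹) :=
  ⟨fun v => by simp [hm.1],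
    fun v h => hm.2 (k⁻¹ v) ((Equiv.eq_symm_apply k).2 (by simpa using h))⟩

variable [DecidableEq V]

theorem IsPerfectMatching.two_dvd_card [Fintype V] {P : Perm V} (hP : IsPerfectMatching P) :
    2 ∣ Fintype.card V := by
  have hsupp : P.support = Finset.univ := Finset.eq_univ_of_forall fun v => mem_support.2 (hP.2 v)
  rw [← Finset.card_univ, ← hsupp]
  exact two_dvd_card_support (by rw [sq, hP.mul_self_eq_one])

theorem numCycles_mul_conj_swap (P m : Perm V) (a b : V) :
    numCycles (P * (swap a b * m * swap a b)) =
      numCycles (P * m * swap a b * swap (P a) (P b)) := by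
  rw [← numCycles_swap_mul, ← mul_assoc, ← mul_assoc, mul_swap_eq_swap_mul P a b]
  simp only [mul_assoc]

theorem TwoBreak.numCycles_mul_le [Finite V] (P : Perm V) {m m' : Perm V} (h : TwoBreak m m') :
    numCycles (P * m') ≤ numCycles (P * m) + 2 := by
  obtain ⟨a, b, -, -, rfl⟩ := h
  rw [numCycles_mul_conj_swap]
  have := numCycles_mul_swap_le (P * m * swap a b) (P a) (P b)
  have := numCycles_mul_swap_le (P * m) a b
  omega

theorem TwoBreakChain.refl (P : Perm V) : TwoBreakChain P P 0 :=
  ⟨fun _ => P, rfl, rfl, fun _ h => absurd h (Nat.not_lt_zero _)⟩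

theorem TwoBreakChain.cons {P m m' : Perm V} {k : ℕ} (h : TwoBreak m m')
    (hc : TwoBreakChain P m' k) : TwoBreakChain P m (k + 1) := by
  obtain ⟨f, hf0, hfk, hf⟩ := hc
  refine ⟨fun | 0 => m | i + 1 => f i, rfl, hfk, ?_⟩
  rintro (_ | i) hi
  · show TwoBreak m (f 0)
    exact hf0 ▸ h
  · exact hf i (by omega)

theorem TwoBreakChain.numCycles_mul_le [Finite V] (P : Perm V) {P' Q : Perm V} {k : ℕ}
    (h : TwoBreakChain P' Q k) : numCycles (P * P') ≤ numCycles (P * Q) + 2 * k := by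
  obtain ⟨f, rfl, rfl, hf⟩ := h
  suffices ∀ i ≤ k, numCycles (P * f i) ≤ numCycles (P * f 0) + 2 * i from this k le_rfl
  intro i hi
  induction i with
  | zero => simp
  | succ i ih =>
    have := (hf i hi).numCycles_mul_le P
    have := ih (by omega)
    omega

theorem IsPerfectMatching.exists_twoBreak [Finite V] {P m : Perm V} (hP : IsPerfectMatching P)
    (hm : IsPerfectMatching m) (hmP : m ≠ P) :
    ∃ m', IsPerfectMatching m' ∧ TwoBreak m m' ∧
      numCycles (P * m') = numCycles (P * m) + 2 := by
  obtain ⟨v, hv⟩ : ∃ v, m v ≠ P v := not_forall.1 fun h => hmP (Equiv.ext h)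
  -- The 2-break on the red edges `{v, m v}` and `{P v, b}` creates the black edge `{v, P v}`.
  obtain ⟨b, hb⟩ : ∃ b, m (P v) = b := ⟨_, rfl⟩
  have hmb : m b = P v := hb ▸ hm.1 _
  have hvb : v ≠ b := by rintro rfl; exact hv hmb
  have hPvb : P v ≠ b := fun h => hm.2 (P v) (hb.trans h.symm)
  have hPbv : P b ≠ P v := fun h => hvb (P.injective h).symm
  have htb : TwoBreak m (swap v b * m * swap v b) :=
    ⟨v, b, hvb, fun h => hP.2 v (m.injective (h.trans hb.symm)).symm, rfl⟩
  refine ⟨_, by simpa using hm.conj (swap v b), htb, ?_⟩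
  have hcut₁ : numCycles (P * m) < numCycles (P * m * swap v b) :=
    numCycles_lt_mul_swap hvb (by simp [hmb, hP.1])
  have hcut₂ : numCycles (P * m * swap v b) < numCycles (P * m * swap v b * swap (P b) (P v)) :=
    numCycles_lt_mul_swap hPbv (by simp [swap_apply_of_ne_of_ne (hP.2 v) hPvb, hb])
  have hle := htb.numCycles_mul_le P
  rw [numCycles_mul_conj_swap, swap_comm (P v)] at hle ⊢
  omega

theorem IsPerfectMatching.exists_twoBreakChain [Fintype V] {P m : Perm V}
    (hP : IsPerfectMatching P) (hm : IsPerfectMatching m) :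
    ∃ j, Fintype.card V = numCycles (P * m) + 2 * j ∧ TwoBreakChain P m j := by
  obtain ⟨d, hd⟩ : ∃ d, Fintype.card V - numCycles (P * m) = d := ⟨_, rfl⟩
  induction d using Nat.strong_induction_on generalizing m with
  | _ d ih =>
    rcases eq_or_ne m P with rfl | hmP
    · exact ⟨0, by rw [hP.mul_self_eq_one, numCycles_one]; rfl, TwoBreakChain.refl m⟩
    · obtain ⟨m', hm', htb, hc⟩ := hP.exists_twoBreak hm hmP
      have hle := numCycles_le_card (P * m')
      obtain ⟨j, hj, hchain⟩ := ih _ (by omega) hm' rfl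
      exact ⟨j + 1, by omega, TwoBreakChain.cons htb hchain⟩

end TwoBreaks

/-- The 2-break distance between circular genomes P and Q on the same
n = |V|/2 blocks equals n - c(P,Q), where c(P,Q) is the number of alternating
black-red cycles of the breakpoint graph. -/
theorem twoBreak_distance {V : Type*} [Fintype V] [DecidableEq V]
    (P Q : Equiv.Perm V) (hP : IsPerfectMatching P) (hQ : IsPerfectMatching Q) :
    sInf {k : ℕ | TwoBreakChain P Q k} = Fintype.card V / 2 - bpCycles P Q := by
  obtain ⟨j, hj, hchain⟩ := hP.exists_twoBreakChain hQ
  have hleast : IsLeast {k : ℕ | TwoBreakChain P Q k} j := by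
    refine ⟨hchain, fun k hk => ?_⟩
    have := hk.numCycles_mul_le P
    rw [hP.mul_self_eq_one, numCycles_one] at this
    omega
  have heven := hP.two_dvd_card
  rw [hleast.csInf_eq, bpCycles, ← numCycles_eq_card_cycleType_add]
  omega
end

section
/- A single 3-break applied to the red matching can increase the number of alternating cycles in the breakpoint graph by at most 2. -/
/-- The number of `ℓ`-cycles (alternating cycles with `ℓ` black and `ℓ` red
edges) of the breakpoint graph: half the number of orbits of size `ℓ` of
`black * red`. -/
def bpCyclesOfLen {V : Type*} [Fintype V] [DecidableEq V]
    (black red : Equiv.Perm V) (ℓ : ℕ) : ℕ :=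
  if ℓ = 1 then (Fintype.card V - (black * red).support.card) / 2
  else (black * red).cycleType.count ℓ / 2


/-- A 3-break on the matching `m`: the red edges inside a set `s` of at most
six vertices (closed under `m`, i.e. a union of at most three red edges) are
replaced by another perfect matching on the same vertices; edges outside `s`
are untouched. -/
def ThreeBreak {V : Type*} (m m' : Equiv.Perm V) : Prop :=
  ∃ s : Finset V, s.card ≤ 6 ∧ (∀ v ∈ s, m v ∈ s) ∧ ∀ v ∉ s, m' v = m v

open Equiv Equiv.Perm Finset

namespace Equiv.Perm

variable {α : Type*}

noncomputable def orbitCount (π : Perm α) : ℕ :=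
  Nat.card (Quotient (SameCycle.setoid π))

theorem orbitCount_eq [Fintype α] [DecidableEq α] (π : Perm α) :
    π.orbitCount = π.cycleType.card + (Fintype.card α - #π.support) := by
  let cls (x : α) : π.cycleFactorsFinset ⊕ {x // x ∉ π.support} :=
    if hx : x ∈ π.support then .inl ⟨π.cycleOf x, cycleOf_mem_cycleFactorsFinset_iff.mpr hx⟩
    else .inr ⟨x, hx⟩
  have cls_eq_iff (x y : α) : cls x = cls y ↔ π.SameCycle x y := by
    by_cases hx : x ∈ π.support <;> by_cases hy : y ∈ π.support
    · simp only [cls, dif_pos hx, dif_pos hy, Sum.inl.injEq, Subtype.mk.injEq,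
        sameCycle_iff_cycleOf_eq_of_mem_support hx hy]
    · simp only [cls, dif_pos hx, dif_neg hy, reduceCtorEq, false_iff]
      exact fun h => hy (h.mem_support_iff.mp hx)
    · simp only [cls, dif_neg hx, dif_pos hy, reduceCtorEq, false_iff]
      exact fun h => hx (h.mem_support_iff.mpr hy)
    · simp only [cls, dif_neg hx, dif_neg hy, Sum.inr.injEq, Subtype.mk.injEq]
      exact ⟨fun h => h ▸ SameCycle.refl π x, fun h => h.eq_of_left (notMem_support.mp hx)⟩
  have cls_surjective : Function.Surjective cls := by
    rintro (⟨c, hc⟩ | ⟨x, hx⟩)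
    · obtain ⟨x, hx⟩ := (mem_cycleFactorsFinset_iff.mp hc).1.nonempty_support
      have hxπ : x ∈ π.support := mem_cycleFactorsFinset_support_le hc hx
      exact ⟨x, by simp only [cls, dif_pos hxπ, cycle_is_cycleOf hx hc]⟩
    · exact ⟨x, dif_neg hx⟩
  have e : Quotient (SameCycle.setoid π) ≃ π.cycleFactorsFinset ⊕ {x // x ∉ π.support} :=
    (Quotient.congrRight fun x y => (cls_eq_iff x y).symm).trans
      (Setoid.quotientKerEquivOfSurjective cls cls_surjective)
  rw [orbitCount, Nat.card_congr e, Nat.card_sum, Nat.card_eq_fintype_card,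
    Nat.card_eq_fintype_card, Fintype.card_coe, Fintype.card_subtype_compl, Fintype.card_coe,
    cycleType_def, Multiset.card_map]
  rfl

theorem pow_mul_apply_eq_pow_apply {π σ : Perm α} {v : α}
    (hv : ∀ n : ℕ, σ (((π * σ) ^ n) v) = ((π * σ) ^ n) v) (n : ℕ) :
    ((π * σ) ^ n) v = (π ^ n) v := by
  induction n with
  | zero => rfl
  | succ n ih => rw [pow_succ', mul_apply, mul_apply, hv n, ih, pow_succ', mul_apply]

theorem sameCycle_mul_iff_of_forall_sameCycle [Finite α] {π σ : Perm α} {v : α}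
    (hv : ∀ w, (π * σ).SameCycle v w → σ w = w) (w : α) :
    (π * σ).SameCycle v w ↔ π.SameCycle v w := by
  have hpow := pow_mul_apply_eq_pow_apply fun n => hv _ (sameCycle_pow_right.mpr (.refl _ v))
  constructor <;> intro h <;> obtain ⟨n, rfl⟩ := h.exists_nat_pow_eq <;>
    exact hpow n ▸ sameCycle_pow_right.mpr (.refl _ v)

theorem orbitCount_mul_lt [Fintype α] [DecidableEq α] (π : Perm α) {σ : Perm α}
    (hσ : σ ≠ 1) :
    (π * σ).orbitCount < π.orbitCount + #σ.support := by
  classical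
  obtain ⟨u, hu⟩ : ∃ u, σ u ≠ u := not_forall.mp fun h => hσ (Equiv.ext h)
  let Qτ := Quotient (SameCycle.setoid (π * σ))
  let Qπ := Quotient (SameCycle.setoid π)
  let Meets (q : Qτ) : Prop := ∃ s : σ.support, Quotient.mk _ s.1 = q
  have eq_of_not_meets (q : Qτ) (hq : ¬ Meets q) {w : α} (hw : π.SameCycle q.out w) :
      q = Quotient.mk _ w := by
    have fixed (x : α) (hx : (π * σ).SameCycle q.out x) : σ x = x := by
      by_contra hσx
      refine hq ⟨⟨x, mem_support.mpr hσx⟩, ?_⟩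
      rw [← q.out_eq]
      exact Quotient.sound hx.symm
    rw [← q.out_eq]
    exact Quotient.sound ((sameCycle_mul_iff_of_forall_sameCycle fixed w).mpr hw)
  let F (q : Qτ) : σ.support ⊕ Qπ :=
    if h : Meets q then .inl h.choose else .inr (Quotient.mk _ q.out)
  have F_injective : Function.Injective F := by
    intro q r hqr
    by_cases hq : Meets q <;> by_cases hr : Meets r <;>
      simp only [F, hq, hr, dite_true, dite_false, reduceCtorEq, Sum.inl.injEq,
        Sum.inr.injEq] at hqr
    · rw [← hq.choose_spec, ← hr.choose_spec, hqr]
    · rw [eq_of_not_meets q hq (Quotient.exact hqr), r.out_eq]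
  have u_not_mem_range : .inr (Quotient.mk _ u) ∉ Set.range F := by
    rintro ⟨q, hq⟩
    by_cases hm : Meets q <;>
      simp only [F, hm, dite_true, dite_false, reduceCtorEq, Sum.inr.injEq] at hq
    exact hm ⟨⟨u, mem_support.mpr hu⟩, (eq_of_not_meets q hm (Quotient.exact hq)).symm⟩
  have := Fintype.card_lt_of_injective_of_notMem F F_injective u_not_mem_range
  rwa [Fintype.card_sum, Fintype.card_coe, ← Nat.card_eq_fintype_card,
    ← Nat.card_eq_fintype_card, add_comm] at this

theorem apply_zpow_mul_apply {b r : Perm α} (hb : Function.Involutive b)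
    (hr : Function.Involutive r) (i : ℤ) (v : α) :
    b (((b * r) ^ i) v) = ((b * r) ^ (-i)) (b v) := by
  have hbb : b * b = 1 := Equiv.ext hb
  have hconj : b * (b * r) * b⁻¹ = (b * r)⁻¹ := by
    rw [mul_inv_rev, inv_eq_of_mul_eq_one_left hbb, inv_eq_of_mul_eq_one_left (Equiv.ext hr),
      ← mul_assoc, hbb, one_mul]
  calc b (((b * r) ^ i) v) = (b * (b * r) ^ i * b⁻¹) (b v) := by simp
    _ = ((b * r) ^ (-i)) (b v) := by rw [← conj_zpow, hconj, inv_zpow']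

theorem sameCycle_apply_of_involutive {b r : Perm α} (hb : Function.Involutive b)
    (hr : Function.Involutive r) {v w : α} (h : (b * r).SameCycle v w) :
    (b * r).SameCycle (b v) (b w) := by
  obtain ⟨i, rfl⟩ := h
  exact ⟨-i, (apply_zpow_mul_apply hb hr i v).symm⟩

end Equiv.Perm

theorem Function.Involutive.even_natCard {β : Type*} [Finite β] {f : β → β}
    (hf : Function.Involutive f) (hfree : ∀ b, f b ≠ b) : Even (Nat.card β) := by
  classical
  have := Fintype.ofFinite β
  have hsupport : (hf.toPerm f).support = Finset.univ :=
    Finset.eq_univ_of_forall fun b => Perm.mem_support.mpr (hfree b)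
  have hsq : hf.toPerm f ^ 2 = 1 := Equiv.ext fun b => hf b
  rw [even_iff_two_dvd, Nat.card_eq_fintype_card, ← Finset.card_univ, ← hsupport]
  exact two_dvd_card_support hsq

namespace IsPerfectMatching

variable {V : Type*} {black red : Perm V}

theorem not_sameCycle_apply_self (hB : IsPerfectMatching black) (hR : IsPerfectMatching red)
    (v : V) : ¬ (black * red).SameCycle v (black v) := by
  rintro ⟨k, hk⟩
  set π := black * red
  have back (i : ℤ) : (π ^ (-i)) (black v) = (π ^ (k - i)) v := by
    rw [← hk, ← mul_apply, ← zpow_add, neg_add_eq_sub]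
  rcases Int.even_or_odd' k with ⟨j, rfl | rfl⟩
  · apply hB.2 ((π ^ j) v)
    rw [apply_zpow_mul_apply hB.1 hR.1, back]
    ring_nf
  · apply hR.2 ((π ^ j) v)
    calc red ((π ^ j) v) = black ((π ^ (j + 1)) v) := by
          rw [add_comm j, zpow_one_add, mul_apply, mul_apply, hB.1]
      _ = (π ^ j) v := by rw [apply_zpow_mul_apply hB.1 hR.1, back]; ring_nf

theorem even_orbitCount_mul [Finite V] (hB : IsPerfectMatching black)
    (hR : IsPerfectMatching red) : Even (black * red).orbitCount := by
  let Q := Quotient (SameCycle.setoid (black * red))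
  let blackOnOrbits : Q → Q :=
    Quotient.map black fun _ _ => sameCycle_apply_of_involutive hB.1 hR.1
  refine Function.Involutive.even_natCard (f := blackOnOrbits) ?_ ?_
  · rintro ⟨v⟩
    exact congrArg (Quotient.mk _) (hB.1 v)
  · rintro ⟨v⟩ h
    exact hB.not_sameCycle_apply_self hR v (Quotient.exact h).symm

end IsPerfectMatching

theorem ThreeBreak.card_support_inv_mul_le {V : Type*} [Fintype V] [DecidableEq V]
    {m m' : Perm V} (h : ThreeBreak m m') : #(m⁻¹ * m').support ≤ 6 := by
  obtain ⟨s, hs, -, hfix⟩ := h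
  refine (card_le_card fun v hv => ?_).trans hs
  by_contra hvs
  exact mem_support.mp hv (by rw [mul_apply, hfix v hvs]; exact m.symm_apply_apply v)

theorem threeBreak_cycles_increase_le_two_general {V : Type*} [Fintype V] [DecidableEq V]
    (black red red' : Equiv.Perm V)
    (hB : IsPerfectMatching black) (hR : IsPerfectMatching red)
    (h : ThreeBreak red red') :
    bpCycles black red' ≤ bpCycles black red + 2 := by
  have bpCycles_eq (r : Perm V) : bpCycles black r = (black * r).orbitCount / 2 := by
    rw [bpCycles, orbitCount_eq]
  rcases eq_or_ne red' red with rfl | hne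
  · exact Nat.le_add_right _ 2
  have hσ : red⁻¹ * red' ≠ 1 := fun h1 => hne (inv_mul_eq_one.mp h1).symm
  have hlt := (black * red).orbitCount_mul_lt hσ
  rw [mul_assoc, mul_inv_cancel_left] at hlt
  have hsupp := h.card_support_inv_mul_le
  obtain ⟨k, hk⟩ := hB.even_orbitCount_mul hR
  rw [bpCycles_eq, bpCycles_eq]
  omega

/-- A single 3-break applied to the red matching increases the number of
alternating cycles of the breakpoint graph by at most 2. -/
theorem threeBreak_cycles_increase_le_two {V : Type*} [Fintype V] [DecidableEq V]
    (black red red' : Equiv.Perm V)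
    (hB : IsPerfectMatching black) (hR : IsPerfectMatching red)
    (hR' : IsPerfectMatching red') (h : ThreeBreak red red') :
    bpCycles black red' ≤ bpCycles black red + 2 :=
  threeBreak_cycles_increase_le_two_general black red red' hB hR h
end

section
/- The minimum number of 3-breaks (where 2-breaks count as special 3-breaks) needed to transform red matching Q into black matching P is at least (n - c(P,Q))/2, where c(P,Q) is the number of alternating cycles. -/
/-- A scenario of k 3-breaks (2-breaks being special 3-breaks) transforming
the red matching Q into the black matching P, all intermediate genomes being
perfect matchings. -/
def ThreeBreakChain {V : Type*} (P Q : Equiv.Perm V) (k : ℕ) : Prop :=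
  ∃ f : ℕ → Equiv.Perm V, f 0 = Q ∧ f k = P ∧
    ∀ i < k, IsPerfectMatching (f (i + 1)) ∧ ThreeBreak (f i) (f (i + 1))

/-! Let `d σ = card V - #orbits σ`. It is the rank of `x ↦ x ∘ σ - x` on `V → ℚ`, hence
subadditive, and `P * Q` has `2 c(P,Q)` orbits. A 3-break `Q → Q'` multiplies `P * Q` by
`Q' * Q`, an even permutation moving at most six vertices, i.e. a product of at most four
transpositions; so a scenario of `k` 3-breaks gives `n - 2 c(P,Q) ≤ d (P * Q) ≤ 4 k`. Scenarios
exist because a 2-break can always make `Q` agree with `P` at one more vertex. -/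

open Finset Module

theorem LinearMap.finrank_range_mul_sub_one_le {K M : Type*} [DivisionRing K] [AddCommGroup M]
    [Module K M] [FiniteDimensional K M] (f g : Module.End K M) :
    finrank K (range (f * g - 1)) ≤ finrank K (range (f - 1)) + finrank K (range (g - 1)) := by
  have hsplit : f * g - 1 = (f - 1) * g + (g - 1) := by noncomm_ring
  calc finrank K (range (f * g - 1))
      ≤ finrank K ↥(range (f - 1) ⊔ range (g - 1)) := by
        refine Submodule.finrank_mono ?_
        rw [hsplit]
        exact (range_add_le _ _).trans (sup_le_sup_right (range_comp_le_range _ _) _)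
    _ ≤ finrank K (range (f - 1)) + finrank K (range (g - 1)) :=
        Submodule.finrank_add_le_finrank_add_finrank _ _

namespace Equiv.Perm

variable {V : Type*}

/-- For finite `V` this is `card V` minus the number of orbits of `σ`, the least number of
transpositions with product `σ`. -/
noncomputable def displacementRank (σ : Perm V) : ℕ :=
  finrank ℚ (LinearMap.range (LinearMap.funLeft ℚ ℚ σ - 1))

@[simp]
theorem displacementRank_one : displacementRank (1 : Perm V) = 0 := by
  have : LinearMap.funLeft ℚ ℚ ((1 : Perm V) : V → V) = 1 := rfl
  rw [displacementRank, this, sub_self, LinearMap.range_zero, finrank_bot]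

theorem displacementRank_mul_le [Fintype V] (σ τ : Perm V) :
    displacementRank (σ * τ) ≤ displacementRank σ + displacementRank τ := by
  have : LinearMap.funLeft ℚ ℚ ⇑(σ * τ) =
      LinearMap.funLeft ℚ ℚ τ * LinearMap.funLeft ℚ ℚ σ := by
    rw [coe_mul, LinearMap.funLeft_comp]; rfl
  rw [add_comm, displacementRank, this]
  exact LinearMap.finrank_range_mul_sub_one_le _ _

theorem displacementRank_swap_le [DecidableEq V] (a b : V) : displacementRank (swap a b) ≤ 1 := by
  have hle : LinearMap.range (LinearMap.funLeft ℚ ℚ (swap a b) - 1) ≤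
      Submodule.span ℚ {Pi.single b 1 - Pi.single a 1} := by
    rintro _ ⟨x, rfl⟩
    refine Submodule.mem_span_singleton.2 ⟨x a - x b, funext fun v => ?_⟩
    simp only [LinearMap.sub_apply, LinearMap.funLeft_apply, Module.End.one_apply, Pi.sub_apply,
      Pi.smul_apply, Pi.single_apply, swap_apply_def, smul_eq_mul]
    split_ifs <;> simp_all
  exact (Submodule.finrank_mono hle).trans ((finrank_span_le_card _).trans (by simp))

theorem SameCycle.apply_eq_of_comp_eq [Finite V] {α : Type*} {σ : Perm V} {x : V → α}
    (hx : x ∘ σ = x) {v w : V} (h : σ.SameCycle v w) : x w = x v := by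
  have hpow : ∀ n : ℕ, x ((σ ^ n) v) = x v := by
    intro n
    induction n with
    | zero => rfl
    | succ n ih => rw [pow_succ', mul_apply, ← ih]; exact congrFun hx _
  obtain ⟨n, -, rfl⟩ := h.exists_pow_eq'
  exact hpow n

variable [Fintype V] [DecidableEq V]

theorem exists_displacementRank_le_sign_eq (σ : Perm V) :
    ∃ k, displacementRank σ ≤ k ∧ k ≤ #σ.support - 1 ∧ sign σ = (-1) ^ k := by
  induction h : #σ.support using Nat.strong_induction_on generalizing σ with
  | _ n ih =>
  rcases eq_or_ne σ 1 with rfl | hσ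
  · exact ⟨0, by simp⟩
  obtain ⟨x, hx⟩ : ∃ x, σ x ≠ x := by simpa [Perm.ext_iff] using hσ
  have hlt : #(swap x (σ x) * σ).support < n := h ▸ card_support_swap_mul hx
  have h2 : 2 ≤ n := h ▸ two_le_card_support_of_ne_one hσ
  obtain ⟨k, hrank, hk, hsign⟩ := ih _ hlt _ rfl
  refine ⟨k + 1, ?_, by omega, ?_⟩
  · calc displacementRank σ = displacementRank (swap x (σ x) * (swap x (σ x) * σ)) := by
          rw [swap_mul_self_mul]
      _ ≤ 1 + k := (displacementRank_mul_le _ _).trans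
          (add_le_add (displacementRank_swap_le _ _) hrank)
      _ = k + 1 := add_comm _ _
  · rw [← swap_mul_self_mul x (σ x) σ, sign_mul, sign_swap hx.symm, hsign, pow_succ, mul_comm]

theorem displacementRank_le_of_sign_eq_one {σ : Perm V} {m : ℕ} (hσ : #σ.support ≤ 2 * m + 2)
    (hsign : sign σ = 1) : displacementRank σ ≤ 2 * m := by
  obtain ⟨k, hrank, hk, hk_sign⟩ := exists_displacementRank_le_sign_eq σ
  obtain ⟨j, rfl⟩ : Even k := (neg_one_pow_eq_one_iff_even (by decide)).1 (hk_sign ▸ hsign)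
  omega

theorem exists_finset_sameCycle_card_le (σ : Perm V) :
    ∃ T : Finset V, #T ≤ Multiset.card σ.cycleType + (Fintype.card V - #σ.support) ∧
      ∀ v, ∃ t ∈ T, σ.SameCycle v t := by
  choose pick hpick using fun c : σ.cycleFactorsFinset =>
    (mem_cycleFactorsFinset_iff.1 c.2).1.nonempty_support
  refine ⟨(univ : Finset σ.cycleFactorsFinset).image pick ∪ σ.supportᶜ, ?_, fun v => ?_⟩
  · refine (card_union_le _ _).trans (add_le_add ?_ (card_compl _).le)
    exact card_image_le.trans (by simp [cycleType_def])
  by_cases hv : v ∈ σ.support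
  · let c : σ.cycleFactorsFinset := ⟨σ.cycleOf v, cycleOf_mem_cycleFactorsFinset_iff.2 hv⟩
    exact ⟨pick c, mem_union_left _ (mem_image_of_mem _ (mem_univ c)),
      (mem_support_cycleOf_iff.1 (hpick c)).1⟩
  · exact ⟨v, mem_union_right _ (mem_compl.2 hv), SameCycle.refl _ _⟩

theorem card_le_displacementRank_add (σ : Perm V) :
    Fintype.card V ≤
      displacementRank σ + (Multiset.card σ.cycleType + (Fintype.card V - #σ.support)) := by
  obtain ⟨T, hT, hcover⟩ := exists_finset_sameCycle_card_le σ
  have hrn := LinearMap.finrank_range_add_finrank_ker (LinearMap.funLeft ℚ ℚ σ - 1)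
  set K := LinearMap.ker (LinearMap.funLeft ℚ ℚ σ - 1)
  have hinj : Function.Injective ((LinearMap.funLeft ℚ ℚ ((↑) : T → V)).comp K.subtype) := by
    rw [← LinearMap.ker_eq_bot, Submodule.eq_bot_iff]
    rintro ⟨x, hx⟩ hxT
    have hinv : x ∘ σ = x := sub_eq_zero.1 hx
    ext v
    obtain ⟨t, ht, hvt⟩ := hcover v
    show x v = 0
    rw [← SameCycle.apply_eq_of_comp_eq hinv hvt]
    exact congrFun (LinearMap.mem_ker.1 hxT) ⟨t, ht⟩
  have hK := LinearMap.finrank_le_finrank_of_injective hinj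
  simp only [finrank_fintype_fun_eq_card, Fintype.card_coe] at hK hrn
  rw [displacementRank]
  omega

end Equiv.Perm

open Equiv Perm

section Matchings

variable {V : Type*}

namespace IsPerfectMatching

variable {m : Perm V}

theorem mul_self (hm : IsPerfectMatching m) : m * m = 1 :=
  Equiv.ext hm.1

theorem conj_s5 (hm : IsPerfectMatching m) (t : Perm V) : IsPerfectMatching (t * m * t⁻¹) :=
  ⟨fun v => by simp [hm.1], fun v h =>
    hm.2 _ (t.eq_symm_apply.2 (by simpa using h))⟩

variable [Fintype V] [DecidableEq V]

theorem cycleType_eq (hm : IsPerfectMatching m) :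
    m.cycleType = Multiset.replicate (Fintype.card V / 2) 2 := by
  have htwo : ∀ n ∈ m.cycleType, n = 2 := fun n hn =>
    le_antisymm (Nat.le_of_dvd two_pos ((dvd_of_mem_cycleType hn).trans
      (orderOf_dvd_of_pow_eq_one (by rw [sq, hm.mul_self])))) (two_le_of_mem_cycleType hn)
  have hsum : m.cycleType.sum = Fintype.card V := by
    rw [sum_cycleType, (card_eq_iff_eq_univ _).2 (by ext v; simpa using hm.2 v)]
  rw [Multiset.eq_replicate_of_mem htwo] at hsum ⊢
  simp only [Multiset.sum_replicate, smul_eq_mul] at hsum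
  rw [← hsum, Nat.mul_div_cancel _ two_pos]

theorem sign_eq {m' : Perm V} (hm : IsPerfectMatching m) (hm' : IsPerfectMatching m') :
    sign m = sign m' := by
  rw [sign_of_cycleType, sign_of_cycleType, hm.cycleType_eq, hm'.cycleType_eq]

end IsPerfectMatching

namespace ThreeBreak

variable [DecidableEq V] {m m' : Perm V}

theorem conj_swap (hm : ∀ v, m (m v) = v) (a b : V) : ThreeBreak m (swap a b * m * swap a b) := by
  refine ⟨{a, b, m a, m b}, card_le_four.trans (by norm_num), fun v hv => ?_, fun v hv => ?_⟩
  · simp only [Finset.mem_insert, Finset.mem_singleton] at hv ⊢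
    rcases hv with rfl | rfl | rfl | rfl <;> simp [hm]
  · simp only [Finset.mem_insert, Finset.mem_singleton, not_or] at hv
    obtain ⟨hva, hvb, hvma, hvmb⟩ := hv
    have hmva : m v ≠ a := fun h => hvma (by rw [← h, hm])
    have hmvb : m v ≠ b := fun h => hvmb (by rw [← h, hm])
    simp [swap_apply_of_ne_of_ne, hva, hvb, hmva, hmvb]

variable [Fintype V]

theorem support_mul_subset {s : Finset V} (hm : ∀ v, m (m v) = v) (hs : ∀ v ∈ s, m v ∈ s)
    (hout : ∀ v ∉ s, m' v = m v) : (m' * m).support ⊆ s := by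
  intro v hv
  by_contra hvs
  have hmv : m v ∉ s := fun h => hvs (hm v ▸ hs _ h)
  exact mem_support.1 hv (by rw [mul_apply, hout _ hmv, hm])

theorem displacementRank_mul_le (hm : IsPerfectMatching m) (hm' : IsPerfectMatching m')
    (h : ThreeBreak m m') : (m' * m).displacementRank ≤ 4 := by
  obtain ⟨s, hs6, hs, hout⟩ := h
  refine displacementRank_le_of_sign_eq_one (m := 2) ?_ ?_
  · exact (card_le_card (support_mul_subset hm.1 hs hout)).trans hs6
  · rw [Perm.sign_mul, hm'.sign_eq hm, Int.units_mul_self]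

end ThreeBreak

namespace ThreeBreakChain

variable {P Q Q' : Perm V} {k : ℕ}

theorem refl (P : Perm V) : ThreeBreakChain P P 0 :=
  ⟨fun _ => P, rfl, rfl, by simp⟩

theorem cons (hQ' : IsPerfectMatching Q') (hb : ThreeBreak Q Q') (h : ThreeBreakChain P Q' k) :
    ThreeBreakChain P Q (k + 1) := by
  obtain ⟨f, h0, hk, hstep⟩ := h
  refine ⟨fun | 0 => Q | i + 1 => f i, rfl, hk, fun i hi => ?_⟩
  cases i with
  | zero => exact (h0 ▸ ⟨hQ', hb⟩ : IsPerfectMatching (f 0) ∧ ThreeBreak Q (f 0))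
  | succ i => exact hstep i (by omega)

theorem displacementRank_mul_le [Fintype V] [DecidableEq V] (hQ : IsPerfectMatching Q)
    (h : ThreeBreakChain P Q k) : (P * Q).displacementRank ≤ 4 * k := by
  obtain ⟨f, h0, hk, hstep⟩ := h
  suffices ∀ i ≤ k, IsPerfectMatching (f i) ∧ (f i * Q).displacementRank ≤ 4 * i from
    hk ▸ (this k le_rfl).2
  intro i
  induction i with
  | zero => intro _; subst h0; simpa [hQ.mul_self] using hQ
  | succ i ih =>
    intro hi
    obtain ⟨hfi, hrank⟩ := ih (by omega)
    obtain ⟨hfi', hb⟩ := hstep i (by omega)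
    refine ⟨hfi', ?_⟩
    calc (f (i + 1) * Q).displacementRank
        = (f (i + 1) * f i * (f i * Q)).displacementRank := by
          rw [mul_assoc, ← mul_assoc (f i), hfi.mul_self, one_mul]
      _ ≤ 4 + 4 * i := (Perm.displacementRank_mul_le _ _).trans
          (add_le_add (hb.displacementRank_mul_le hfi hfi') hrank)
      _ = 4 * (i + 1) := by ring

end ThreeBreakChain

namespace IsPerfectMatching

variable [Fintype V] [DecidableEq V] {P Q : Perm V}

/-- Conjugating `Q` by the transposition of `Q a` and `P a` is a 2-break after which `Q` agrees
with `P` at `a` and wherever it agreed before. -/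
theorem exists_threeBreak_card_lt (hP : IsPerfectMatching P) (hQ : IsPerfectMatching Q)
    (hne : Q ≠ P) :
    ∃ Q', IsPerfectMatching Q' ∧ ThreeBreak Q Q' ∧ #{v | Q' v ≠ P v} < #{v | Q v ≠ P v} := by
  obtain ⟨a, ha⟩ : ∃ a, Q a ≠ P a := by simpa [Perm.ext_iff] using hne
  set t := swap (Q a) (P a)
  have hfix : ∀ v, Q v = P v → t v = v := by
    intro v hv
    refine swap_apply_of_ne_of_ne ?_ ?_ <;> rintro rfl
    · exact ha (by rw [← hP.1 (Q a), ← hv, hQ.1])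
    · exact ha (by rw [← hQ.1 (P a), hv, hP.1])
  have hagree : ∀ v, Q v = P v → (t * Q * t) v = P v := by
    intro v hv
    have hQv : Q (Q v) = P (Q v) := by rw [hQ.1, hv, hP.1]
    rw [mul_apply, mul_apply, hfix v hv, hfix _ hQv, hv]
  have hta : t a = a := swap_apply_of_ne_of_ne (hQ.2 a).symm (hP.2 a).symm
  have hQ'a : (t * Q * t) a = P a := by rw [mul_apply, mul_apply, hta, swap_apply_left]
  refine ⟨t * Q * t, by simpa [t] using hQ.conj_s5 t, ThreeBreak.conj_swap hQ.1 _ _, ?_⟩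
  refine card_lt_card ((ssubset_iff_of_subset fun v => ?_).2 ⟨a, ?_, ?_⟩)
  · simpa only [mem_filter, mem_univ, true_and] using mt (hagree v)
  · simpa using ha
  · simpa only [mem_filter, mem_univ, true_and, not_not] using hQ'a

theorem exists_threeBreakChain (hP : IsPerfectMatching P) (hQ : IsPerfectMatching Q) :
    ∃ k, ThreeBreakChain P Q k := by
  induction h : #{v | Q v ≠ P v} using Nat.strong_induction_on generalizing Q with
  | _ n ih =>
  rcases eq_or_ne Q P with rfl | hne
  · exact ⟨0, .refl Q⟩
  obtain ⟨Q', hQ', hb, hlt⟩ := hP.exists_threeBreak_card_lt hQ hne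
  obtain ⟨k, hk⟩ := ih _ (h ▸ hlt) hQ' rfl
  exact ⟨k + 1, hk.cons hQ' hb⟩

end IsPerfectMatching

end Matchings

/-- The minimum number of 3-breaks needed to transform the red matching Q into
the black matching P is at least (n - c(P,Q))/2. -/
theorem threeBreak_distance_lower_bound {V : Type*} [Fintype V] [DecidableEq V]
    (P Q : Equiv.Perm V) (hP : IsPerfectMatching P) (hQ : IsPerfectMatching Q) :
    Fintype.card V / 2 - bpCycles P Q ≤ 2 * sInf {k : ℕ | ThreeBreakChain P Q k} := by
  obtain ⟨k, hk⟩ := hP.exists_threeBreakChain hQ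
  -- without a scenario the infimum would be the junk value `sInf ∅ = 0`
  have hmin := Nat.sInf_mem (s := {k | ThreeBreakChain P Q k}) ⟨k, hk⟩
  have hrank := hmin.displacementRank_mul_le hQ
  have horbits := card_le_displacementRank_add (P * Q)
  unfold bpCycles
  omega
end
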